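/- (Theorem 1.iii) For every threshold T ≥ 2, low service rate μ ∈ (0,1), and reward R with R > 1/μ, the set {λ ∈ (0,1) : W(λ) = R} of positive equilibrium arrival rates is nonempty and has at most three elements. -/

import Mathlib

noncomputable def g (T : ℕ) (μ : ℝ) (x : ℝ) : ℝ :=
  -((T : ℝ) - 1) * (1 - μ) * x ^ T
    - (1 - μ) * ∑ j ∈ Finset.Icc 1 (T - 1),
        μ ^ (j - 1) * (((T : ℝ) - ((j : ℝ) + 1)) * μ + (j : ℝ) - 1 - (T : ℝ)) * x ^ (T - j)
    + μ ^ (T - 1)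

noncomputable def d (T : ℕ) (μ : ℝ) (x : ℝ) : ℝ :=
  (1 - μ) * ∑ j ∈ Finset.Icc 0 (T - 1), μ ^ j * x ^ (T - j) + μ ^ T

noncomputable def W (T : ℕ) (μ : ℝ) (x : ℝ) : ℝ :=
  g T μ x / ((1 - x) * d T μ x)

noncomputable def cub (a b c e x : ℝ) : ℝ := a + b*x + c*x^2 + e*x^3

lemma hasDerivAt_cub (a b c e x : ℝ) :
    HasDerivAt (fun y => cub a b c e y) (b + 2*c*x + 3*e*x^2) x := by
  have h1 : HasDerivAt (fun y : ℝ => y) 1 x := hasDerivAt_id x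
  have h2 : HasDerivAt (fun y : ℝ => y^2) (2*x) x := by simpa using hasDerivAt_pow 2 x
  have h3 : HasDerivAt (fun y : ℝ => y^3) (3*x^2) x := by simpa using hasDerivAt_pow 3 x
  have h := ((((h1.const_mul b).add (h2.const_mul c)).add (h3.const_mul e)).const_add a)
  have he : (fun y : ℝ => a + (b * y + c * y^2 + e * y^3)) = fun y => cub a b c e y := by
    funext y; simp [cub]; ring
  simp only [Pi.add_apply] at h; rw [he] at h
  refine h.congr_deriv ?_; ring

lemma hasDerivAt_cub_div_pow (a b c e : ℝ) (n : ℕ) (x : ℝ) (hx : x ≠ 0) :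
    HasDerivAt (fun y => cub a b c e y / y^(n+1))
      (cub (-((n:ℝ)+1)*a) (-(n:ℝ)*b) ((1-(n:ℝ))*c) ((2-(n:ℝ))*e) x / x^(n+2)) x := by
  have hd := (hasDerivAt_cub a b c e x).div (hasDerivAt_pow (n+1) x) (pow_ne_zero _ hx)
  refine hd.congr_deriv ?_
  have h1 : (↑(n+1) : ℝ) * x ^ (n + 1 - 1) = ((n:ℝ)+1) * x^n := by push_cast; ring_nf
  rw [h1]
  unfold cub
  field_simp
  ring

lemma rolle_chain (f f' : ℝ → ℝ) (hf : ∀ x ∈ Set.Ioo (0:ℝ) 1, HasDerivAt f (f' x) x) :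
    ∀ (n : ℕ) (s : Finset ℝ), s.card ≤ n → (↑s ⊆ Set.Ioo (0:ℝ) 1) → (∀ x ∈ s, f x = 0) →
    ∃ u : Finset ℝ, ↑u ⊆ Set.Ioo (0:ℝ) 1 ∧ (∀ x ∈ u, f' x = 0) ∧ s.card ≤ u.card + 1 ∧
      (∀ y ∈ u, y ∉ s ∧ ∃ b ∈ s, y < b) := by
  intro n
  induction n with
  | zero =>
    intro s hcard _ _
    exact ⟨∅, by simp, by simp, by simp [Finset.card_eq_zero.mp (Nat.le_zero.mp hcard)], by simp⟩
  | succ n ih =>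
    intro s hcard hsub hzero
    by_cases h1 : s.card ≤ 1
    · exact ⟨∅, by simp, by simp, by simpa using h1, by simp⟩
    · push_neg at h1
      have hne : s.Nonempty := Finset.card_pos.mp (by omega)
      set M := s.max' hne with hM
      have hMs : M ∈ s := s.max'_mem hne
      set s' := s.erase M with hs'
      have hcard' : s'.card = s.card - 1 := Finset.card_erase_of_mem hMs
      have hne' : s'.Nonempty := Finset.card_pos.mp (by omega)
      set M' := s'.max' hne' with hM'
      have hM's' : M' ∈ s' := s'.max'_mem hne'
      have hM's : M' ∈ s := Finset.mem_of_mem_erase hM's'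
      have hlt : M' < M := lt_of_le_of_ne (s.le_max' M' hM's) (Finset.ne_of_mem_erase hM's')
      have hMIoo : M ∈ Set.Ioo (0:ℝ) 1 := hsub hMs
      have hM'Ioo : M' ∈ Set.Ioo (0:ℝ) 1 := hsub hM's
      have hIccsub : Set.Icc M' M ⊆ Set.Ioo (0:ℝ) 1 := fun z hz =>
        ⟨lt_of_lt_of_le hM'Ioo.1 hz.1, lt_of_le_of_lt hz.2 hMIoo.2⟩
      have hcont : ContinuousOn f (Set.Icc M' M) := fun z hz =>
        ((hf z (hIccsub hz)).continuousAt).continuousWithinAt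
      have hrolle := exists_hasDerivAt_eq_zero hlt hcont
        (by rw [hzero M' hM's, hzero M hMs])
        (fun z hz => hf z (hIccsub ⟨le_of_lt hz.1, le_of_lt hz.2⟩))
      obtain ⟨y, hyIoo, hy0⟩ := hrolle
      obtain ⟨u', hu'sub, hu'zero, hu'card, hu'between⟩ := ih s' (by omega)
        (fun z hz => hsub (Finset.mem_of_mem_erase hz)) (fun z hz => hzero z (Finset.mem_of_mem_erase hz))
      have hynotu' : y ∉ u' := by
        intro hyu'
        obtain ⟨-, b, hb, hyb⟩ := hu'between y hyu'
        have : b ≤ M' := s'.le_max' b hb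
        linarith [hyIoo.1]
      refine ⟨insert y u', ?_, ?_, ?_, ?_⟩
      · intro z hz
        rcases Finset.mem_insert.mp hz with rfl | hz
        · exact hIccsub ⟨le_of_lt hyIoo.1, le_of_lt hyIoo.2⟩
        · exact hu'sub hz
      · intro z hz
        rcases Finset.mem_insert.mp hz with rfl | hz
        · exact hy0
        · exact hu'zero z hz
      · rw [Finset.card_insert_of_notMem hynotu']; omega
      · intro z hz
        rcases Finset.mem_insert.mp hz with rfl | hz
        · constructor
          · intro hzs
            rcases eq_or_ne z M with rfl | hne2
            · exact absurd hyIoo.2 (lt_irrefl _)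
            · have : z ∈ s' := Finset.mem_erase.mpr ⟨hne2, hzs⟩
              have : z ≤ M' := s'.le_max' z this
              linarith [hyIoo.1]
          · exact ⟨M, hMs, hyIoo.2⟩
        · obtain ⟨hz1, b, hb, hzb⟩ := hu'between z hz
          refine ⟨?_, b, Finset.mem_of_mem_erase hb, hzb⟩
          intro hzs
          rcases eq_or_ne z M with rfl | hne2
          · have hbM : b ≤ M' := s'.le_max' b hb
            linarith [s.le_max' b (Finset.mem_of_mem_erase hb)]
          · exact hz1 (Finset.mem_erase.mpr ⟨hne2, hzs⟩)

lemma key_E (μ : ℝ) : ∀ (T : ℕ), 1 ≤ T → ∀ x : ℝ,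
    (x - μ) * (∑ j ∈ Finset.Icc 1 (T-1), μ^(j-1) * x^(T-j)) = x^T - μ^(T-1) * x := by
  intro T hT
  induction T, hT using Nat.le_induction with
  | base => intro x; simp
  | succ n hn ih =>
    intro x
    obtain ⟨m, rfl⟩ : ∃ m, n = m + 1 := ⟨n - 1, by omega⟩
    have hsplit : ∑ j ∈ Finset.Icc 1 (m+1+1-1), μ^(j-1) * x^(m+1+1-j)
        = (∑ j ∈ Finset.Icc 1 (m+1-1), μ^(j-1) * x^(m+1-j)) * x + μ^m * x := by
      have h1 : (m+1+1-1 : ℕ) = m + 1 := by omega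
      rw [h1, Finset.sum_Icc_succ_top (by omega : 1 ≤ m + 1)]
      have h2 : (m+1-1 : ℕ) = m := by omega
      rw [h2]
      congr 1
      · rw [Finset.sum_mul]
        apply Finset.sum_congr rfl
        intro j hj
        have hj' := Finset.mem_Icc.mp hj
        have h3 : (m+1+1-j : ℕ) = (m+1-j) + 1 := by omega
        rw [h3, pow_succ]; ring
      · have h4 : (m+1+1-(m+1) : ℕ) = 1 := by omega
        rw [h4]; ring
    rw [hsplit]
    have ih' := ih x
    have h6 : x^(m+1+1) - μ^(m+1+1-1)*x
        = x * (x^(m+1) - μ^(m+1-1)*x) + (x - μ) * (μ^m * x) := by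
      have h7 : (m+1+1-1 : ℕ) = m + 1 := by omega
      have h8 : (m+1-1 : ℕ) = m := by omega
      rw [h7, h8, pow_succ, pow_succ]; ring
    rw [h6, ← ih']; ring

lemma key_d (μ : ℝ) : ∀ (T : ℕ), 1 ≤ T → ∀ x : ℝ,
    (x - μ) * d T μ x = (1-μ) * x^(T+1) - μ^(T+1) * (1-x) := by
  intro T hT
  induction T, hT using Nat.le_induction with
  | base => intro x; simp [d]; ring
  | succ n hn ih =>
    intro x
    obtain ⟨m, rfl⟩ : ∃ m, n = m + 1 := ⟨n - 1, by omega⟩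
    have hrec : d (m+1+1) μ x = x * d (m+1) μ x + μ^(m+1+1) * (1-x) := by
      unfold d
      have h1 : (m+1+1-1 : ℕ) = m + 1 := by omega
      have h2 : (m+1-1 : ℕ) = m := by omega
      rw [h1, h2, Finset.sum_Icc_succ_top (by omega : 0 ≤ m + 1)]
      have hsum : ∑ j ∈ Finset.Icc 0 m, μ^j * x^(m+1+1-j)
          = (∑ j ∈ Finset.Icc 0 m, μ^j * x^(m+1-j)) * x := by
        rw [Finset.sum_mul]
        apply Finset.sum_congr rfl
        intro j hj
        have hj' := Finset.mem_Icc.mp hj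
        have h3 : (m+1+1-j : ℕ) = (m+1-j) + 1 := by omega
        rw [h3, pow_succ]; ring
      rw [hsum]
      have h4 : (m+1+1-(m+1) : ℕ) = 1 := by omega
      rw [h4]
      rw [pow_succ μ (m+1), pow_succ μ m]
      ring
    rw [hrec]
    have ih' := ih x
    have h5 : (x - μ) * (x * d (m+1) μ x) = x * ((1-μ)*x^(m+1+1-1+1) - μ^(m+1+1-1+1)*(1-x)) := by
      rw [show (m+1+1-1 : ℕ) = m+1 by omega]
      rw [← ih']; ring
    rw [mul_add, h5]
    rw [show (m+1+1-1 : ℕ) = m+1 by omega]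
    rw [pow_succ x (m+1), pow_succ μ (m+1)]
    ring

lemma g_rec (μ x : ℝ) (m : ℕ) :
    g (m+2) μ x = x * g (m+1) μ x - (1-μ)*x^(m+2) - μ^m*x
      + (1-μ)^2 * x * (∑ j ∈ Finset.Icc 1 m, μ^(j-1) * x^(m+1-j))
      + 2*(1-μ)*μ^m*x + μ^(m+1) := by
  unfold g
  have h1 : (m+2-1 : ℕ) = m+1 := by omega
  have h2 : (m+1-1 : ℕ) = m := by omega
  rw [h1, h2, Finset.sum_Icc_succ_top (by omega : 1 ≤ m+1)]
  have hbody : ∑ j ∈ Finset.Icc 1 m,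
        μ ^ (j - 1) * ((((m+2 : ℕ) : ℝ) - ((j : ℝ) + 1)) * μ + (j : ℝ) - 1 - ((m+2 : ℕ) : ℝ)) * x ^ (m+2 - j)
      = x * (∑ j ∈ Finset.Icc 1 m,
          μ ^ (j - 1) * ((((m+1 : ℕ) : ℝ) - ((j : ℝ) + 1)) * μ + (j : ℝ) - 1 - ((m+1 : ℕ) : ℝ)) * x ^ (m+1 - j))
        + (μ - 1) * x * (∑ j ∈ Finset.Icc 1 m, μ^(j-1) * x^(m+1-j)) := by
    rw [Finset.mul_sum, Finset.mul_sum, ← Finset.sum_add_distrib]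
    apply Finset.sum_congr rfl
    intro j hj
    have hj' := Finset.mem_Icc.mp hj
    have h3 : (m+2-j : ℕ) = (m+1-j)+1 := by omega
    rw [h3, pow_succ]
    push_cast
    ring
  rw [hbody]
  have h4 : (m+2-(m+1) : ℕ) = 1 := by omega
  rw [h4]
  push_cast
  ring

lemma key_g (μ : ℝ) : ∀ (T : ℕ), 1 ≤ T → ∀ x : ℝ,
    (x - μ)^2 * g T μ x
      = μ^(T+1) * (1-x)^2 + (1-μ) * x^T * ((x^2 - μ) - (T:ℝ) * (x-1) * (x-μ)) := by
  intro T hT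
  induction T, hT using Nat.le_induction with
  | base =>
    intro x
    have hg1 : g 1 μ x = 1 := by simp [g]
    rw [hg1]
    push_cast
    ring
  | succ n hn ih =>
    intro x
    obtain ⟨m, rfl⟩ : ∃ m, n = m + 1 := ⟨n - 1, by omega⟩
    have hE := key_E μ (m+1) (by omega) x
    rw [show (m+1-1 : ℕ) = m by omega] at hE
    have ih' := ih x
    rw [g_rec]
    push_cast at ih' hE ⊢
    linear_combination x * ih' + (1-μ)^2 * x * (x-μ) * hE

lemma d_mu (μ : ℝ) (T : ℕ) (hT : 1 ≤ T) :
    d T μ μ = μ^T * ((T:ℝ)*(1-μ) + 1) := by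
  unfold d
  have hsum : ∑ j ∈ Finset.Icc 0 (T-1), μ^j * μ^(T-j) = (T:ℝ) * μ^T := by
    have hconst : ∀ j ∈ Finset.Icc 0 (T-1), μ^j * μ^(T-j) = μ^T := by
      intro j hj
      have hj' := Finset.mem_Icc.mp hj
      rw [← pow_add]
      congr 1
      omega
    rw [Finset.sum_congr rfl hconst, Finset.sum_const, Nat.card_Icc]
    rw [show (T - 1 + 1 - 0 : ℕ) = T by omega, nsmul_eq_mul]
  rw [hsum]; ring

lemma E_mu (μ : ℝ) (T : ℕ) (hT : 1 ≤ T) :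
    ∑ j ∈ Finset.Icc 1 (T-1), μ^(j-1) * μ^(T-j) = ((T:ℝ) - 1) * μ^(T-1) := by
  have hconst : ∀ j ∈ Finset.Icc 1 (T-1), μ^(j-1) * μ^(T-j) = μ^(T-1) := by
    intro j hj
    have hj' := Finset.mem_Icc.mp hj
    rw [← pow_add]
    congr 1
    omega
  rw [Finset.sum_congr rfl hconst, Finset.sum_const, Nat.card_Icc]
  rw [show (T - 1 + 1 - 1 : ℕ) = T - 1 by omega, nsmul_eq_mul]
  congr 1
  push_cast [Nat.cast_sub hT]
  ring

noncomputable def gam (T : ℕ) (μ : ℝ) : ℝ :=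
  1 + ((T:ℝ)-1)*(1-μ)*(2-μ) + (1-μ)^2*((T:ℝ)-1)*((T:ℝ)-2)/2

lemma g_mu (μ : ℝ) : ∀ (T : ℕ), 1 ≤ T → g T μ μ = μ^(T-1) * gam T μ := by
  intro T hT
  induction T, hT using Nat.le_induction with
  | base => simp [g, gam]
  | succ n hn ih =>
    obtain ⟨m, rfl⟩ : ∃ m, n = m + 1 := ⟨n - 1, by omega⟩
    have hrec := g_rec μ μ m
    have hE := E_mu μ (m+1) (by omega)
    rw [show (m+1-1 : ℕ) = m by omega] at hE ih
    rw [hrec, ih, hE, show (m+1+1-1 : ℕ) = m+1 by omega]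
    unfold gam
    push_cast
    ring

lemma d_pos (T : ℕ) (μ x : ℝ) (hμ0 : 0 < μ) (hμ1 : μ < 1) (hx : 0 ≤ x) :
    0 < d T μ x := by
  unfold d
  have h1 : 0 ≤ (1 - μ) * ∑ j ∈ Finset.Icc 0 (T-1), μ^j * x^(T-j) := by
    apply mul_nonneg (by linarith)
    apply Finset.sum_nonneg
    intro j hj
    exact mul_nonneg (pow_nonneg (le_of_lt hμ0) _) (pow_nonneg hx _)
  have h2 : 0 < μ^T := pow_pos hμ0 T
  linarith

lemma g_cont (T : ℕ) (μ : ℝ) : Continuous (g T μ) := by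
  unfold g
  apply Continuous.add
  apply Continuous.sub
  · exact (continuous_const.mul (continuous_pow T))
  · exact continuous_const.mul (continuous_finset_sum _ (fun j _ =>
      (continuous_const.mul (continuous_pow (T - j)))))
  · exact continuous_const

lemma d_cont (T : ℕ) (μ : ℝ) : Continuous (d T μ) := by
  unfold d
  apply Continuous.add
  · exact continuous_const.mul (continuous_finset_sum _ (fun j _ =>
      (continuous_const.mul (continuous_pow (T - j)))))
  · exact continuous_const




lemma hasDerivAt_level (c a b cc e f0 f1 f2 f3 : ℝ) (n : ℕ) (x : ℝ) (hx : x ≠ 0) :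
    HasDerivAt (fun y => c * (cub a b cc e y / y^(n+1)) + cub f0 f1 f2 f3 y)
      (c * (cub (-((n:ℝ)+1)*a) (-(n:ℝ)*b) ((1-(n:ℝ))*cc) ((2-(n:ℝ))*e) x / x^(n+2))
        + cub f1 (2*f2) (3*f3) 0 x) x := by
  have h := ((hasDerivAt_cub_div_pow a b cc e n x hx).const_mul c).add (hasDerivAt_cub f0 f1 f2 f3 x)
  refine h.congr_deriv ?_
  simp only [cub]; ring

-- the five level functions (K denotes (k:ℝ))
noncomputable def Gf0 (μ R : ℝ) (k : ℕ) (x : ℝ) : ℝ :=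
  μ^(k+2) * (cub (1-R*μ) (R+2*R*μ-2) (1-2*R-R*μ) R x / x^(k+1))
    + cub ((1-μ)*(-((k:ℝ)+2)*μ)) ((1-μ)*(((k:ℝ)+1)*(1+μ)+R*μ))
        ((1-μ)*(-(k:ℝ)-R*(1+μ))) ((1-μ)*R) x

noncomputable def Gf1 (μ R : ℝ) (k : ℕ) (x : ℝ) : ℝ :=
  μ^(k+2) * (cub (-((k:ℝ)+1)*(1-R*μ)) (-(k:ℝ)*(R+2*R*μ-2)) ((1-(k:ℝ))*(1-2*R-R*μ)) ((2-(k:ℝ))*R) x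
      / x^(k+2))
    + cub ((1-μ)*(((k:ℝ)+1)*(1+μ)+R*μ)) (2*((1-μ)*(-(k:ℝ)-R*(1+μ)))) (3*((1-μ)*R)) 0 x

noncomputable def Gf2 (μ R : ℝ) (k : ℕ) (x : ℝ) : ℝ :=
  μ^(k+2) * (cub (((k:ℝ)+2)*((k:ℝ)+1)*(1-R*μ)) (((k:ℝ)+1)*(k:ℝ)*(R+2*R*μ-2))
        ((k:ℝ)*((k:ℝ)-1)*(1-2*R-R*μ)) (((k:ℝ)-1)*((k:ℝ)-2)*R) x / x^(k+3))
    + cub (2*((1-μ)*(-(k:ℝ)-R*(1+μ)))) (6*((1-μ)*R)) 0 0 x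

noncomputable def Gf3 (μ R : ℝ) (k : ℕ) (x : ℝ) : ℝ :=
  μ^(k+2) * (cub (-((k:ℝ)+3)*((k:ℝ)+2)*((k:ℝ)+1)*(1-R*μ)) (-((k:ℝ)+2)*((k:ℝ)+1)*(k:ℝ)*(R+2*R*μ-2))
        (-((k:ℝ)+1)*(k:ℝ)*((k:ℝ)-1)*(1-2*R-R*μ)) (-(k:ℝ)*((k:ℝ)-1)*((k:ℝ)-2)*R) x / x^(k+4))
    + cub (6*((1-μ)*R)) 0 0 0 x

noncomputable def Gf4 (μ R : ℝ) (k : ℕ) (x : ℝ) : ℝ :=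
  μ^(k+2) * (cub (((k:ℝ)+4)*((k:ℝ)+3)*((k:ℝ)+2)*((k:ℝ)+1)*(1-R*μ))
        (((k:ℝ)+3)*((k:ℝ)+2)*((k:ℝ)+1)*(k:ℝ)*(R+2*R*μ-2))
        (((k:ℝ)+2)*((k:ℝ)+1)*(k:ℝ)*((k:ℝ)-1)*(1-2*R-R*μ))
        (((k:ℝ)+1)*(k:ℝ)*((k:ℝ)-1)*((k:ℝ)-2)*R) x / x^(k+5))

lemma Gd0 (μ R : ℝ) (k : ℕ) (x : ℝ) (hx : x ≠ 0) :
    HasDerivAt (Gf0 μ R k) (Gf1 μ R k x) x := by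
  have h := hasDerivAt_level (μ^(k+2)) (1-R*μ) (R+2*R*μ-2) (1-2*R-R*μ) R
    ((1-μ)*(-((k:ℝ)+2)*μ)) ((1-μ)*(((k:ℝ)+1)*(1+μ)+R*μ)) ((1-μ)*(-(k:ℝ)-R*(1+μ))) ((1-μ)*R)
    k x hx
  unfold Gf0 Gf1
  convert h using 1

lemma Gd1 (μ R : ℝ) (k : ℕ) (x : ℝ) (hx : x ≠ 0) :
    HasDerivAt (Gf1 μ R k) (Gf2 μ R k x) x := by
  have h := hasDerivAt_level (μ^(k+2)) (-((k:ℝ)+1)*(1-R*μ)) (-(k:ℝ)*(R+2*R*μ-2))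
    ((1-(k:ℝ))*(1-2*R-R*μ)) ((2-(k:ℝ))*R)
    ((1-μ)*(((k:ℝ)+1)*(1+μ)+R*μ)) (2*((1-μ)*(-(k:ℝ)-R*(1+μ)))) (3*((1-μ)*R)) 0
    (k+1) x hx
  unfold Gf1 Gf2
  convert h using 1
  simp only [cub]
  push_cast
  ring

lemma Gd2 (μ R : ℝ) (k : ℕ) (x : ℝ) (hx : x ≠ 0) :
    HasDerivAt (Gf2 μ R k) (Gf3 μ R k x) x := by
  have h := hasDerivAt_level (μ^(k+2)) (((k:ℝ)+2)*((k:ℝ)+1)*(1-R*μ)) (((k:ℝ)+1)*(k:ℝ)*(R+2*R*μ-2))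
    ((k:ℝ)*((k:ℝ)-1)*(1-2*R-R*μ)) (((k:ℝ)-1)*((k:ℝ)-2)*R)
    (2*((1-μ)*(-(k:ℝ)-R*(1+μ)))) (6*((1-μ)*R)) 0 0
    (k+2) x hx
  unfold Gf2 Gf3
  convert h using 1
  simp only [cub]
  push_cast
  ring

lemma Gd3 (μ R : ℝ) (k : ℕ) (x : ℝ) (hx : x ≠ 0) :
    HasDerivAt (Gf3 μ R k) (Gf4 μ R k x) x := by
  have h := hasDerivAt_level (μ^(k+2)) (-((k:ℝ)+3)*((k:ℝ)+2)*((k:ℝ)+1)*(1-R*μ))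
    (-((k:ℝ)+2)*((k:ℝ)+1)*(k:ℝ)*(R+2*R*μ-2))
    (-((k:ℝ)+1)*(k:ℝ)*((k:ℝ)-1)*(1-2*R-R*μ)) (-(k:ℝ)*((k:ℝ)-1)*((k:ℝ)-2)*R)
    (6*((1-μ)*R)) 0 0 0
    (k+3) x hx
  unfold Gf3 Gf4
  convert h using 1
  simp only [cub]
  push_cast
  ring



noncomputable def Qpi (K x : ℝ) : ℝ :=
  cub (-((K+1)*(K+2)*(K+3)*(K+4))) (2*(K*(K+1)*(K+2)*(K+3))) (-((K-1)*K*(K+1)*(K+2))) 0 x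

noncomputable def Qrho (K x : ℝ) : ℝ :=
  cub 0 (K*(K+1)*(K+2)*(K+3)) (-2*((K-1)*K*(K+1)*(K+2))) ((K-2)*(K-1)*K*(K+1)) x

lemma Qrho_pos (K x : ℝ) (hK1 : 1 ≤ K) (hx : x ∈ Set.Ioo (0:ℝ) 1) :
    0 < Qrho K x := by
  obtain ⟨hx0, hx1⟩ := hx
  have key : Qrho K x = x * ((1-x)*((K-1)*(K*((K+1)*(2*(K+2) - (K-2)*(1+x)))))
      + 12*((K+1)*K)) := by
    unfold Qrho cub; ring
  rw [key]
  apply mul_pos hx0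
  have hq : 0 < 2*(K+2) - (K-2)*(1+x) := by
    rcases le_or_gt K 2 with h | h
    · nlinarith
    · nlinarith
  have h1 : 0 ≤ (K-1)*(K*((K+1)*(2*(K+2) - (K-2)*(1+x)))) :=
    mul_nonneg (by linarith) (le_of_lt (mul_pos (by linarith) (mul_pos (by linarith) hq)))
  have h2 : 0 < 12*((K+1)*K) := by nlinarith
  have h3 : 0 ≤ (1-x)*((K-1)*(K*((K+1)*(2*(K+2) - (K-2)*(1+x))))) :=
    mul_nonneg (by linarith) h1
  linarith

lemma Qpi_neg (K x : ℝ) (hK1 : 1 ≤ K) (hx : x ∈ Set.Ioo (0:ℝ) 1) :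
    Qpi K x < 0 := by
  obtain ⟨hx0, hx1⟩ := hx
  have key : Qpi K x = -((1-x)*(K*((K+1)*((K+2)*(2*(K+3) - (K-1)*(1+x)))))
      + 12*((K+1)*(K+2))) := by
    unfold Qpi cub; ring
  rw [key]
  have hq : 0 < 2*(K+3) - (K-1)*(1+x) := by nlinarith
  have h1 : 0 ≤ K*((K+1)*((K+2)*(2*(K+3) - (K-1)*(1+x)))) :=
    le_of_lt (mul_pos (by linarith) (mul_pos (by linarith) (mul_pos (by linarith) hq)))
  have h3 : 0 ≤ (1-x)*(K*((K+1)*((K+2)*(2*(K+3) - (K-1)*(1+x))))) :=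
    mul_nonneg (by linarith) h1
  have h2 : 0 < 12*((K+1)*(K+2)) := by nlinarith
  linarith

lemma wron_pos (K x : ℝ) (hK1 : 1 ≤ K) (hKi : K = 1 ∨ 2 ≤ K) (hx : x ∈ Set.Ioo (0:ℝ) 1) :
    0 < (2*(K*(K+1)*(K+2)*(K+3)) + 2*(-((K-1)*K*(K+1)*(K+2)))*x + 3*0*x^2) * Qrho K x
        - Qpi K x * ((K*(K+1)*(K+2)*(K+3)) + 2*(-2*((K-1)*K*(K+1)*(K+2)))*x
            + 3*((K-2)*(K-1)*K*(K+1))*x^2) := by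
  obtain ⟨hx0, hx1⟩ := hx
  have h12 : 0 ≤ (K-1)*(K-2) := by
    rcases hKi with rfl | h
    · norm_num
    · nlinarith
  have hz1 : (0:ℝ) ≤ K - 1 := by linarith
  have hy : (0:ℝ) < 1 - x := by linarith
  have hK0 : (0:ℝ) < K := by linarith
  have hA : (0:ℝ) < (K+1)^2*(K*(K+2)) := by positivity
  have hA2 : (0:ℝ) < (K+1)^2*(K^2*(K+2)) := by positivity
  have key : (2*(K*(K+1)*(K+2)*(K+3)) + 2*(-((K-1)*K*(K+1)*(K+2)))*x + 3*0*x^2) * Qrho K x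
        - Qpi K x * ((K*(K+1)*(K+2)*(K+3)) + 2*(-2*((K-1)*K*(K+1)*(K+2)))*x
            + 3*((K-2)*(K-1)*K*(K+1))*x^2)
      = (240*((K+1)^2*(K*(K+2)))) * (1 + (K-1)*(1-x))
        + (24*((K+1)^2*(K*(K+2)))) * (((K-1)*(4*K-3)) * (1-x)^2)
        + (16*((K+1)^2*(K^2*(K+2)))) * (((K-1)*(K-2)) * (1-x)^3)
        + ((K+1)^2*(K^2*(K+2))) * ((((K-1)*(K-2))*(K-1)) * (1-x)^4) := by
    unfold Qpi Qrho cub; ring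
  rw [key]
  have t1 : 0 < (240*((K+1)^2*(K*(K+2)))) * (1 + (K-1)*(1-x)) := by
    apply mul_pos (by linarith)
    have := mul_nonneg hz1 (le_of_lt hy)
    linarith
  have t2 : 0 ≤ (24*((K+1)^2*(K*(K+2)))) * (((K-1)*(4*K-3)) * (1-x)^2) :=
    mul_nonneg (by linarith) (mul_nonneg (mul_nonneg hz1 (by linarith)) (sq_nonneg _))
  have t3 : 0 ≤ (16*((K+1)^2*(K^2*(K+2)))) * (((K-1)*(K-2)) * (1-x)^3) :=
    mul_nonneg (by linarith) (mul_nonneg h12 (by positivity))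
  have t4 : 0 ≤ ((K+1)^2*(K^2*(K+2))) * ((((K-1)*(K-2))*(K-1)) * (1-x)^4) :=
    mul_nonneg (by linarith) (mul_nonneg (mul_nonneg h12 hz1) (by positivity))
  linarith

lemma ratio_mono (K : ℝ) (hK1 : 1 ≤ K) (hKi : K = 1 ∨ 2 ≤ K) :
    StrictMonoOn (fun x => Qpi K x / Qrho K x) (Set.Ioo (0:ℝ) 1) := by
  have hQd : ∀ x : ℝ, HasDerivAt (Qpi K) (2*(K*(K+1)*(K+2)*(K+3)) + 2*(-((K-1)*K*(K+1)*(K+2)))*x + 3*0*x^2) x :=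
    fun x => hasDerivAt_cub _ _ _ _ x
  have hQd2 : ∀ x : ℝ, HasDerivAt (Qrho K) ((K*(K+1)*(K+2)*(K+3)) + 2*(-2*((K-1)*K*(K+1)*(K+2)))*x + 3*((K-2)*(K-1)*K*(K+1))*x^2) x :=
    fun x => hasDerivAt_cub _ _ _ _ x
  apply strictMonoOn_of_deriv_pos (convex_Ioo (0:ℝ) 1)
  · apply ContinuousOn.div
    · exact (Continuous.continuousOn (by unfold Qpi cub; fun_prop))
    · exact (Continuous.continuousOn (by unfold Qrho cub; fun_prop))
    · exact fun x hx => ne_of_gt (Qrho_pos K x hK1 hx)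
  · intro x hx
    rw [interior_Ioo] at hx
    have hd := (hQd x).div (hQd2 x) (ne_of_gt (Qrho_pos K x hK1 hx))
    rw [show deriv (fun x => Qpi K x / Qrho K x) x = _ from hd.deriv]
    exact div_pos (wron_pos K x hK1 hKi hx) (pow_pos (Qrho_pos K x hK1 hx) 2)


lemma pencil (μ R K x : ℝ) :
    cub ((K+4)*(K+3)*(K+2)*(K+1)*(1-R*μ)) ((K+3)*(K+2)*(K+1)*K*(R+2*R*μ-2))
        ((K+2)*(K+1)*K*(K-1)*(1-2*R-R*μ)) ((K+1)*K*(K-1)*(K-2)*R) x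
      = (R*μ-1)*Qpi K x + R*Qrho K x := by
  simp only [Qpi, Qrho, cub]; ring

lemma Gf0_zero (μ R : ℝ) (k : ℕ) (hk : 1 ≤ k) (hμ0 : 0 < μ) (hμ1 : μ < 1) {x : ℝ}
    (hx : x ∈ Set.Ioo (0:ℝ) 1) (hW : W (k+1) μ x = R) : Gf0 μ R k x = 0 := by
  have hx0 : (0:ℝ) < x := hx.1
  have hx0' : x ≠ 0 := ne_of_gt hx0
  have hd := d_pos (k+1) μ x hμ0 hμ1 (le_of_lt hx0)
  have hden : (1-x) * d (k+1) μ x ≠ 0 := ne_of_gt (mul_pos (by linarith [hx.2]) hd)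
  have hF : g (k+1) μ x - R*((1-x)*d (k+1) μ x) = 0 := by
    unfold W at hW
    rw [div_eq_iff hden] at hW
    linarith
  have hgx := key_g μ (k+1) (by omega) x
  have hdx := key_d μ (k+1) (by omega) x
  have hcancel : x^(k+1) * Gf0 μ R k x
      = μ^(k+2) * (cub (1-R*μ) (R+2*R*μ-2) (1-2*R-R*μ) R x)
        + x^(k+1) * (cub ((1-μ)*(-((k:ℝ)+2)*μ)) ((1-μ)*(((k:ℝ)+1)*(1+μ)+R*μ))
            ((1-μ)*(-(k:ℝ)-R*(1+μ))) ((1-μ)*R) x) := by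
    unfold Gf0
    field_simp
  have hmain : x^(k+1) * Gf0 μ R k x
      = (x-μ)^2 * (g (k+1) μ x - R*((1-x)*d (k+1) μ x)) := by
    rw [hcancel]
    unfold cub
    push_cast at hgx ⊢
    linear_combination (-1 : ℝ) * hgx + (R*(1-x)*(x-μ)) * hdx
  rw [hF, mul_zero] at hmain
  exact (mul_eq_zero.mp hmain).resolve_left (pow_ne_zero _ hx0')

lemma Gf0_mu (μ R : ℝ) (k : ℕ) (hμ0 : 0 < μ) : Gf0 μ R k μ = 0 := by
  have hμne : μ ≠ 0 := ne_of_gt hμ0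
  have h1 : μ^(k+1) * Gf0 μ R k μ = 0 := by
    unfold Gf0 cub
    field_simp
    ring
  exact (mul_eq_zero.mp h1).resolve_left (pow_ne_zero _ hμne)

lemma Gf1_mu (μ R : ℝ) (k : ℕ) (hμ0 : 0 < μ) : Gf1 μ R k μ = 0 := by
  have hμne : μ ≠ 0 := ne_of_gt hμ0
  have h1 : μ^(k+2) * Gf1 μ R k μ = 0 := by
    unfold Gf1 cub
    field_simp
    ring
  exact (mul_eq_zero.mp h1).resolve_left (pow_ne_zero _ hμne)

lemma Gf2_mu (μ R : ℝ) (k : ℕ) (hk : 1 ≤ k) (hμ0 : 0 < μ)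
    (hFmu : g (k+1) μ μ - R*((1-μ)*d (k+1) μ μ) = 0) : Gf2 μ R k μ = 0 := by
  have hμne : μ ≠ 0 := ne_of_gt hμ0
  have hgm := g_mu μ (k+1) (by omega)
  rw [show (k+1-1 : ℕ) = k by omega] at hgm
  have hdm := d_mu μ (k+1) (by omega)
  have h2 : μ^k * (gam (k+1) μ - R*(1-μ)*(μ*((((k:ℝ))+1)*(1-μ)+1))) = 0 := by
    rw [hgm, hdm] at hFmu
    push_cast at hFmu ⊢
    linear_combination hFmu
  have hbr : gam (k+1) μ - R*(1-μ)*(μ*((((k:ℝ))+1)*(1-μ)+1)) = 0 :=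
    (mul_eq_zero.mp h2).resolve_left (pow_ne_zero _ hμne)
  have h3 : μ^(k+3) * Gf2 μ R k μ
      = μ^(k+2) * 2 * (gam (k+1) μ - R*(1-μ)*(μ*((((k:ℝ))+1)*(1-μ)+1))) := by
    unfold Gf2 cub gam
    push_cast
    field_simp
    ring
  rw [hbr, mul_zero] at h3
  exact (mul_eq_zero.mp h3).resolve_left (pow_ne_zero _ hμne)

lemma Gf4_two_zeros (μ R : ℝ) (k : ℕ) (hk : 1 ≤ k) (hμ0 : 0 < μ) (hRμ : 1 < R*μ) (hR : 0 < R)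
    {x1 x2 : ℝ} (h1 : x1 ∈ Set.Ioo (0:ℝ) 1) (h2 : x2 ∈ Set.Ioo (0:ℝ) 1) (hne : x1 ≠ x2)
    (hz1 : Gf4 μ R k x1 = 0) (hz2 : Gf4 μ R k x2 = 0) : False := by
  have hK1 : 1 ≤ ((k:ℝ)) := by exact_mod_cast hk
  have hKi : ((k:ℝ)) = 1 ∨ 2 ≤ ((k:ℝ)) := by
    rcases Nat.lt_or_ge k 2 with h | h
    · left
      have : k = 1 := by omega
      rw [this]; norm_num
    · right; exact_mod_cast h
  have hcz : ∀ x ∈ Set.Ioo (0:ℝ) 1, Gf4 μ R k x = 0 →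
      (R*μ-1)*Qpi ((k:ℝ)) x + R*Qrho ((k:ℝ)) x = 0 := by
    intro x hx hz
    unfold Gf4 at hz
    have hxne : x^(k+5) ≠ 0 := pow_ne_zero _ (ne_of_gt hx.1)
    have hμne : μ^(k+2) ≠ 0 := pow_ne_zero _ (ne_of_gt hμ0)
    rcases mul_eq_zero.mp hz with h | h
    · exact absurd h hμne
    · rcases div_eq_zero_iff.mp h with h' | h'
      · rw [pencil] at h'; exact h'
      · exact absurd h' hxne
  have main : ∀ y1 y2 : ℝ, y1 ∈ Set.Ioo (0:ℝ) 1 → y2 ∈ Set.Ioo (0:ℝ) 1 → y1 < y2 →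
      (R*μ-1)*Qpi ((k:ℝ)) y1 + R*Qrho ((k:ℝ)) y1 = 0 →
      (R*μ-1)*Qpi ((k:ℝ)) y2 + R*Qrho ((k:ℝ)) y2 = 0 → False := by
    intro y1 y2 hy1 hy2 hlt e1 e2
    have hmono := ratio_mono ((k:ℝ)) hK1 hKi hy1 hy2 hlt
    have hr1 := Qrho_pos ((k:ℝ)) y1 hK1 hy1
    have hr2 := Qrho_pos ((k:ℝ)) y2 hK1 hy2
    simp only at hmono
    rw [div_lt_div_iff₀ hr1 hr2] at hmono
    have hdiff : (R*μ-1) * (Qpi ((k:ℝ)) y1 * Qrho ((k:ℝ)) y2 - Qpi ((k:ℝ)) y2 * Qrho ((k:ℝ)) y1) = 0 := by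
      linear_combination Qrho ((k:ℝ)) y2 * e1 - Qrho ((k:ℝ)) y1 * e2
    rcases mul_eq_zero.mp hdiff with h | h
    · linarith
    · linarith
  rcases lt_or_gt_of_ne hne with hlt | hgt
  · exact main x1 x2 h1 h2 hlt (hcz x1 h1 hz1) (hcz x2 h2 hz2)
  · exact main x2 x1 h2 h1 hgt (hcz x2 h2 hz2) (hcz x1 h1 hz1)

theorem stmt_9 (T : ℕ) (hT : 2 ≤ T) (μ : ℝ) (hμ : μ ∈ Set.Ioo (0 : ℝ) 1)
    (R : ℝ) (hR : R > 1 / μ) :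
    {lam ∈ Set.Ioo (0 : ℝ) 1 | W T μ lam = R}.Nonempty ∧
      {lam ∈ Set.Ioo (0 : ℝ) 1 | W T μ lam = R}.encard ≤ 3 := by
  obtain ⟨hμ0, hμ1⟩ := hμ
  have hμne : μ ≠ 0 := ne_of_gt hμ0
  have hRμ : 1 < R * μ := by
    rw [gt_iff_lt, div_lt_iff₀ hμ0] at hR
    linarith
  have hRpos : 0 < R := by
    have h1μ : (0:ℝ) < 1/μ := by positivity
    linarith
  obtain ⟨k, rfl⟩ : ∃ k, T = k + 1 := ⟨T - 1, by omega⟩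
  have hk : 1 ≤ k := by omega
  have hμIoo : μ ∈ Set.Ioo (0:ℝ) 1 := ⟨hμ0, hμ1⟩
  -- values of g and d at 0 and 1
  have hg1 : g (k+1) μ 1 = 1 := by
    have h := key_g μ (k+1) (by omega) 1
    have h2 : (1-μ)^2 * g (k+1) μ 1 = (1-μ)^2 * 1 := by
      push_cast at h
      linear_combination h
    exact mul_left_cancel₀ (pow_ne_zero 2 (by intro hc; rw [sub_eq_zero] at hc; exact absurd hc.symm (ne_of_lt hμ1))) h2
  have hg0 : g (k+1) μ 0 = μ^k := by
    have h := key_g μ (k+1) (by omega) 0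
    rw [zero_pow (by omega : k+1 ≠ 0)] at h
    have h2 : μ^2 * g (k+1) μ 0 = μ^2 * μ^k := by
      push_cast at h
      linear_combination h
    exact mul_left_cancel₀ (pow_ne_zero 2 hμne) h2
  have hd0 : d (k+1) μ 0 = μ^(k+1) := by
    have h := key_d μ (k+1) (by omega) 0
    rw [zero_pow (by omega : k+1+1 ≠ 0)] at h
    have h2 : μ * d (k+1) μ 0 = μ * μ^(k+1) := by
      linear_combination (-1:ℝ) * h
    exact mul_left_cancel₀ hμne h2
  -- existence
  set F : ℝ → ℝ := fun x => g (k+1) μ x - R*((1-x) * d (k+1) μ x) with hFdef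
  have hFcont : Continuous F :=
    (g_cont _ _).sub (continuous_const.mul ((continuous_const.sub continuous_id).mul (d_cont _ _)))
  have hF0 : F 0 < 0 := by
    simp only [hFdef]
    rw [hg0, hd0, pow_succ]
    have hp : 0 < μ^k := pow_pos hμ0 k
    nlinarith
  have hF1 : 0 < F 1 := by
    simp only [hFdef]
    rw [hg1]
    norm_num
  obtain ⟨c, hcIoo, hc0⟩ := intermediate_value_Ioo (by norm_num : (0:ℝ) ≤ 1)
    hFcont.continuousOn ⟨hF0, hF1⟩
  have hdc : 0 < (1 - c) * d (k+1) μ c :=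
    mul_pos (by linarith [hcIoo.2]) (d_pos _ _ _ hμ0 hμ1 (le_of_lt hcIoo.1))
  have hWc : W (k+1) μ c = R := by
    unfold W
    rw [div_eq_iff (ne_of_gt hdc)]
    simp only [hFdef] at hc0
    linarith
  constructor
  · exact ⟨c, hcIoo, hWc⟩
  -- at most three
  by_contra hcon
  have h4 : (4:ℕ∞) ≤ {lam ∈ Set.Ioo (0 : ℝ) 1 | W (k+1) μ lam = R}.encard := by
    have h3 : (3:ℕ∞) < {lam ∈ Set.Ioo (0 : ℝ) 1 | W (k+1) μ lam = R}.encard := not_le.mp hcon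
    exact Order.add_one_le_of_lt h3
  obtain ⟨t, htS, ht4⟩ := Set.exists_subset_encard_eq h4
  have htfin : t.Finite := Set.finite_of_encard_eq_coe (by exact_mod_cast ht4)
  have hftcard : htfin.toFinset.card = 4 := by
    have h := htfin.encard_eq_coe_toFinset_card
    rw [ht4] at h
    exact_mod_cast h.symm
  set ft := htfin.toFinset with hftdef
  have hftS : ∀ z ∈ ft, z ∈ Set.Ioo (0:ℝ) 1 ∧ W (k+1) μ z = R := by
    intro z hz
    exact htS (htfin.mem_toFinset.mp hz)
  have hftIoo : ↑ft ⊆ Set.Ioo (0:ℝ) 1 := fun z hz => (hftS z hz).1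
  have hftzero : ∀ z ∈ ft, Gf0 μ R k z = 0 := fun z hz =>
    Gf0_zero μ R k hk hμ0 hμ1 (hftS z hz).1 (hftS z hz).2
  -- derivative hypotheses
  have hd0' : ∀ x ∈ Set.Ioo (0:ℝ) 1, HasDerivAt (Gf0 μ R k) (Gf1 μ R k x) x :=
    fun x hx => Gd0 μ R k x (ne_of_gt hx.1)
  have hd1' : ∀ x ∈ Set.Ioo (0:ℝ) 1, HasDerivAt (Gf1 μ R k) (Gf2 μ R k x) x :=
    fun x hx => Gd1 μ R k x (ne_of_gt hx.1)
  have hd2' : ∀ x ∈ Set.Ioo (0:ℝ) 1, HasDerivAt (Gf2 μ R k) (Gf3 μ R k x) x :=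
    fun x hx => Gd2 μ R k x (ne_of_gt hx.1)
  have hd3' : ∀ x ∈ Set.Ioo (0:ℝ) 1, HasDerivAt (Gf3 μ R k) (Gf4 μ R k x) x :=
    fun x hx => Gd3 μ R k x (ne_of_gt hx.1)
  by_cases hμft : μ ∈ ft
  · -- μ is itself an equilibrium
    have hWμ : W (k+1) μ μ = R := (hftS μ hμft).2
    have hFμ : g (k+1) μ μ - R*((1-μ)*d (k+1) μ μ) = 0 := by
      have hdμ : 0 < (1-μ) * d (k+1) μ μ :=
        mul_pos (by linarith) (d_pos _ _ _ hμ0 hμ1 (le_of_lt hμ0))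
      unfold W at hWμ
      rw [div_eq_iff (ne_of_gt hdμ)] at hWμ
      linarith
    have hG2μ := Gf2_mu μ R k hk hμ0 hFμ
    obtain ⟨u1, hu1sub, hu1zero, hu1card, hu1btw⟩ :=
      rolle_chain (Gf0 μ R k) (Gf1 μ R k) hd0' ft.card ft le_rfl hftIoo hftzero
    have hμu1 : μ ∉ u1 := fun h => (hu1btw μ h).1 hμft
    have hu1'zero : ∀ x ∈ insert μ u1, Gf1 μ R k x = 0 := by
      intro x hx
      rcases Finset.mem_insert.mp hx with heq | hx
      · rw [heq]; exact Gf1_mu μ R k hμ0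
      · exact hu1zero x hx
    have hu1'sub : ↑(insert μ u1) ⊆ Set.Ioo (0:ℝ) 1 := by
      intro x hx
      rcases Finset.mem_insert.mp (by exact_mod_cast hx : x ∈ insert μ _) with heq | hx
      · rw [heq]; exact hμIoo
      · exact hu1sub hx
    obtain ⟨u2, hu2sub, hu2zero, hu2card, hu2btw⟩ :=
      rolle_chain (Gf1 μ R k) (Gf2 μ R k) hd1' (insert μ u1).card (insert μ u1) le_rfl hu1'sub hu1'zero
    have hμu2 : μ ∉ u2 := fun h => (hu2btw μ h).1 (Finset.mem_insert_self μ u1)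
    have hu2'zero : ∀ x ∈ insert μ u2, Gf2 μ R k x = 0 := by
      intro x hx
      rcases Finset.mem_insert.mp hx with heq | hx
      · rw [heq]; exact hG2μ
      · exact hu2zero x hx
    have hu2'sub : ↑(insert μ u2) ⊆ Set.Ioo (0:ℝ) 1 := by
      intro x hx
      rcases Finset.mem_insert.mp (by exact_mod_cast hx : x ∈ insert μ _) with heq | hx
      · rw [heq]; exact hμIoo
      · exact hu2sub hx
    obtain ⟨u3, hu3sub, hu3zero, hu3card, hu3btw⟩ :=
      rolle_chain (Gf2 μ R k) (Gf3 μ R k) hd2' (insert μ u2).card (insert μ u2) le_rfl hu2'sub hu2'zero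
    obtain ⟨u4, hu4sub, hu4zero, hu4card, hu4btw⟩ :=
      rolle_chain (Gf3 μ R k) (Gf4 μ R k) hd3' u3.card u3 le_rfl hu3sub hu3zero
    have hcard4 : 1 < u4.card := by
      have e1 : (insert μ u1).card = u1.card + 1 := Finset.card_insert_of_notMem hμu1
      have e2 : (insert μ u2).card = u2.card + 1 := Finset.card_insert_of_notMem hμu2
      omega
    obtain ⟨a, ha, b, hb, hab⟩ := Finset.one_lt_card.mp hcard4
    exact Gf4_two_zeros μ R k hk hμ0 hRμ hRpos (hu4sub ha) (hu4sub hb) hab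
      (hu4zero a ha) (hu4zero b hb)
  · -- μ is not an equilibrium point among the four
    have hs0zero : ∀ x ∈ insert μ ft, Gf0 μ R k x = 0 := by
      intro x hx
      rcases Finset.mem_insert.mp hx with heq | hx
      · rw [heq]; exact Gf0_mu μ R k hμ0
      · exact hftzero x hx
    have hs0sub : ↑(insert μ ft) ⊆ Set.Ioo (0:ℝ) 1 := by
      intro x hx
      rcases Finset.mem_insert.mp (by exact_mod_cast hx : x ∈ insert μ _) with heq | hx
      · rw [heq]; exact hμIoo
      · exact hftIoo hx
    obtain ⟨u1, hu1sub, hu1zero, hu1card, hu1btw⟩ :=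
      rolle_chain (Gf0 μ R k) (Gf1 μ R k) hd0' (insert μ ft).card (insert μ ft) le_rfl hs0sub hs0zero
    have hμu1 : μ ∉ u1 := fun h => (hu1btw μ h).1 (Finset.mem_insert_self μ ft)
    have hu1'zero : ∀ x ∈ insert μ u1, Gf1 μ R k x = 0 := by
      intro x hx
      rcases Finset.mem_insert.mp hx with heq | hx
      · rw [heq]; exact Gf1_mu μ R k hμ0
      · exact hu1zero x hx
    have hu1'sub : ↑(insert μ u1) ⊆ Set.Ioo (0:ℝ) 1 := by
      intro x hx
      rcases Finset.mem_insert.mp (by exact_mod_cast hx : x ∈ insert μ _) with heq | hx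
      · rw [heq]; exact hμIoo
      · exact hu1sub hx
    obtain ⟨u2, hu2sub, hu2zero, hu2card, hu2btw⟩ :=
      rolle_chain (Gf1 μ R k) (Gf2 μ R k) hd1' (insert μ u1).card (insert μ u1) le_rfl hu1'sub hu1'zero
    obtain ⟨u3, hu3sub, hu3zero, hu3card, hu3btw⟩ :=
      rolle_chain (Gf2 μ R k) (Gf3 μ R k) hd2' u2.card u2 le_rfl hu2sub hu2zero
    obtain ⟨u4, hu4sub, hu4zero, hu4card, hu4btw⟩ :=
      rolle_chain (Gf3 μ R k) (Gf4 μ R k) hd3' u3.card u3 le_rfl hu3sub hu3zero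
    have hcard4 : 1 < u4.card := by
      have e0 : (insert μ ft).card = ft.card + 1 := Finset.card_insert_of_notMem hμft
      have e1 : (insert μ u1).card = u1.card + 1 := Finset.card_insert_of_notMem hμu1
      omega
    obtain ⟨a, ha, b, hb, hab⟩ := Finset.one_lt_card.mp hcard4
    exact Gf4_two_zeros μ R k hk hμ0 hRμ hRpos (hu4sub ha) (hu4sub hb) hab
      (hu4zero a ha) (hu4zero b hb)
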